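/- arXiv:2312.15394 — 2 statements merged into one kernel-verified Lean document; each statement's English description precedes it below -/
import Mathlib

section
/- Let A, B be n×n complex positive definite matrices. (1) If A ⪯ B in the near order, then for all t, s ∈ [0, ∞): A ◇_t (A ◇_s B) = A ◇_{ts} B. (2) If B ⪯ A in the near order, then for all t, s ∈ (−∞, 1]: (A ◇_s B) ◇_t B = A ◇_{(1−t)s + t} B. -/
open scoped ComplexOrder Matrix

noncomputable section

/-- Real power of a (positive definite) matrix via the continuous functional calculus. -/
def mpow {n : ℕ} (A : Matrix (Fin n) (Fin n) ℂ) (t : ℝ) : Matrix (Fin n) (Fin n) ℂ :=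
  cfc (fun x : ℝ => x ^ t) A

/-- The matrix logarithm of a (positive definite) matrix via the continuous functional calculus. -/
def mlog {n : ℕ} (A : Matrix (Fin n) (Fin n) ℂ) : Matrix (Fin n) (Fin n) ℂ :=
  cfc Real.log A

/-- The metric geometric mean `A ♯ₜ B = A^{1/2} (A^{-1/2} B A^{-1/2})^t A^{1/2}`.
`A ♯ B` is `gmean A B (1/2)`. -/
def gmean {n : ℕ} (A B : Matrix (Fin n) (Fin n) ℂ) (t : ℝ) : Matrix (Fin n) (Fin n) ℂ :=
  mpow A (1/2) * mpow (mpow A (-(1/2)) * B * mpow A (-(1/2))) t * mpow A (1/2)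

/-- The Loewner order: `A ≤ B` iff `B - A` is positive semidefinite. -/
def LoewnerLE {n : ℕ} (A B : Matrix (Fin n) (Fin n) ℂ) : Prop :=
  (B - A).PosSemidef

/-- The near order: `A ⪯ B` iff `I ≤ A⁻¹ ♯ B` in the Loewner order. -/
def NearLE {n : ℕ} (A B : Matrix (Fin n) (Fin n) ℂ) : Prop :=
  LoewnerLE 1 (gmean A⁻¹ B (1/2))

/-- The spectral geometric mean `A ♮ₜ B = (A⁻¹ ♯ B)^t A (A⁻¹ ♯ B)^t`. -/
def smean {n : ℕ} (A B : Matrix (Fin n) (Fin n) ℂ) (t : ℝ) : Matrix (Fin n) (Fin n) ℂ :=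
  mpow (gmean A⁻¹ B (1/2)) t * A * mpow (gmean A⁻¹ B (1/2)) t

/-- The Wasserstein mean `A ◇ₜ B = [(1-t)I + t(A⁻¹ ♯ B)] A [(1-t)I + t(A⁻¹ ♯ B)]`. -/
def wmean {n : ℕ} (A B : Matrix (Fin n) (Fin n) ℂ) (t : ℝ) : Matrix (Fin n) (Fin n) ℂ :=
  (((1 - t : ℝ) : ℂ) • (1 : Matrix (Fin n) (Fin n) ℂ) + ((t : ℝ) : ℂ) • gmean A⁻¹ B (1/2)) * A *
    (((1 - t : ℝ) : ℂ) • (1 : Matrix (Fin n) (Fin n) ℂ) + ((t : ℝ) : ℂ) • gmean A⁻¹ B (1/2))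

/-- The arithmetic mean `A ∇ₜ B = (1-t)A + tB`. -/
def amean {n : ℕ} (A B : Matrix (Fin n) (Fin n) ℂ) (t : ℝ) : Matrix (Fin n) (Fin n) ℂ :=
  ((1 - t : ℝ) : ℂ) • A + ((t : ℝ) : ℂ) • B

/-- The matrix absolute value `|X| = (XᴴX)^{1/2}`. -/
def matAbs {n : ℕ} (X : Matrix (Fin n) (Fin n) ℂ) : Matrix (Fin n) (Fin n) ℂ :=
  mpow (Xᴴ * X) (1/2)

/-- The eigenvalues of a Hermitian matrix listed in nonincreasing order:
`eigDesc hA i` is `λ_{i+1}(A)`, so `eigDesc hA 0 = λ₁(A) ≥ eigDesc hA 1 = λ₂(A) ≥ ⋯`. -/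
def eigDesc {n : ℕ} {A : Matrix (Fin n) (Fin n) ℂ} (hA : A.IsHermitian) : Fin n → ℝ :=
  fun i => (hA.eigenvalues ∘ Tuple.sort hA.eigenvalues) i.rev

/-!
Write `S = A⁻¹ ♯ B`. It is the unique positive definite solution of the Riccati equation
`S A S = B` (uniqueness: `A^{1/2} (M A M) A^{1/2}` is the square of `A^{1/2} M A^{1/2}`), and
`A ◇ₜ B = Mₜ A Mₜ` with `Mₜ = (1 - t) I + t S`. If `A ⪯ B`, i.e. `S ≥ I`, then `Mₛ ≥ I` for
`s ≥ 0`, so uniqueness gives `A⁻¹ ♯ (A ◇ₛ B) = Mₛ`; since `(1 - t) I + t Mₛ = M_{ts}`, part (1)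
follows. Uniqueness also gives `B⁻¹ ♯ A = S⁻¹`, whence the symmetry `A ◇ₜ B = B ◇_{1-t} A`, which
turns part (2) into part (1) for the pair `(B, A)`.
-/

lemma Real.continuousOn_rpow_const_of_pos {s : Set ℝ} (hs : ∀ x ∈ s, 0 < x) (t : ℝ) :
    ContinuousOn (fun x : ℝ => x ^ t) s :=
  continuousOn_id.rpow_const fun x hx => Or.inl (hs x hx).ne'

lemma Matrix.PosDef.mul_mul_same_of_posDef {m 𝕜 : Type*} [Fintype m] [DecidableEq m] [RCLike 𝕜]
    {A M : Matrix m m 𝕜} (hA : A.PosDef) (hM : M.PosDef) : (M * A * M).PosDef := by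
  simpa only [hM.1.eq] using
    hA.conjTranspose_mul_mul_same (Matrix.mulVec_injective_iff_isUnit.2 hM.isUnit)

open MatrixOrder in
lemma Matrix.PosDef.spectrum_real_pos {m 𝕜 : Type*} [Fintype m] [DecidableEq m] [RCLike 𝕜]
    {A : Matrix m m 𝕜} (hA : A.PosDef) : ∀ x ∈ spectrum ℝ A, 0 < x :=
  fun _ hx => hA.isStrictlyPositive.spectrum_pos hx

section

variable {n : ℕ} {A B M : Matrix (Fin n) (Fin n) ℂ}

open MatrixOrder in
lemma mpow_posDef (hA : A.PosDef) (t : ℝ) : (mpow A t).PosDef :=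
  Matrix.isStrictlyPositive_iff_posDef.1 <|
    (cfc_isStrictlyPositive_iff _ A
      (Real.continuousOn_rpow_const_of_pos hA.spectrum_real_pos t)).2
      fun x hx => Real.rpow_pos_of_pos (hA.spectrum_real_pos x hx) t

lemma mpow_mul_mpow (hA : A.PosDef) (s t : ℝ) : mpow A s * mpow A t = mpow A (s + t) := by
  rw [mpow, mpow, mpow,
    ← cfc_mul _ _ A (Real.continuousOn_rpow_const_of_pos hA.spectrum_real_pos s)
      (Real.continuousOn_rpow_const_of_pos hA.spectrum_real_pos t)]
  exact cfc_congr fun x hx => (Real.rpow_add (hA.spectrum_real_pos x hx) s t).symm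

lemma mpow_zero (hA : A.PosDef) : mpow A 0 = 1 := by
  rw [mpow, cfc_congr fun x _ => Real.rpow_zero x]
  exact cfc_const_one ℝ A hA.1

lemma mpow_one (hA : A.PosDef) : mpow A 1 = A := by
  rw [mpow, cfc_congr fun x _ => Real.rpow_one x]
  exact cfc_id' ℝ A hA.1

lemma mpow_mpow (hA : A.PosDef) (s t : ℝ) : mpow (mpow A s) t = mpow A (s * t) := by
  have hpos : ∀ y ∈ (fun x : ℝ => x ^ s) '' spectrum ℝ A, 0 < y := by
    rintro _ ⟨x, hx, rfl⟩
    exact Real.rpow_pos_of_pos (hA.spectrum_real_pos x hx) s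
  have hcomp := cfc_comp (fun x : ℝ => x ^ t) (fun x : ℝ => x ^ s) A hA.1
    (Real.continuousOn_rpow_const_of_pos hpos t)
    (Real.continuousOn_rpow_const_of_pos hA.spectrum_real_pos s)
  rw [mpow, mpow, mpow, ← hcomp]
  exact cfc_congr fun x hx => (Real.rpow_mul (hA.spectrum_real_pos x hx).le s t).symm

lemma mpow_inv (hA : A.PosDef) (t : ℝ) : mpow A⁻¹ t = mpow A (-t) := by
  have h : mpow A (-1) * mpow A 1 = 1 := by norm_num [mpow_mul_mpow hA, mpow_zero hA]
  rw [mpow_one hA] at h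
  rw [Matrix.inv_eq_left_inv h, mpow_mpow hA, neg_one_mul]

lemma mpow_half_mul_mpow_half (hA : A.PosDef) : mpow A (1/2) * mpow A (1/2) = A := by
  norm_num [mpow_mul_mpow hA, mpow_one hA]

lemma mpow_neg_half_mul_mpow_half (hA : A.PosDef) : mpow A (-(1/2)) * mpow A (1/2) = 1 := by
  norm_num [mpow_mul_mpow hA, mpow_zero hA]

lemma mpow_half_mul_mpow_neg_half (hA : A.PosDef) : mpow A (1/2) * mpow A (-(1/2)) = 1 := by
  norm_num [mpow_mul_mpow hA, mpow_zero hA]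

lemma mpow_mul_self_half (hA : A.PosDef) : mpow (A * A) (1/2) = A := by
  rw [← mpow_one hA, mpow_mul_mpow hA, mpow_mpow hA]
  norm_num [mpow_one hA]

lemma gmean_inv_half (hA : A.PosDef) (X : Matrix (Fin n) (Fin n) ℂ) :
    gmean A⁻¹ X (1/2) =
      mpow A (-(1/2)) * mpow (mpow A (1/2) * X * mpow A (1/2)) (1/2) * mpow A (-(1/2)) := by
  rw [gmean, mpow_inv hA, mpow_inv hA, neg_neg]

lemma gmean_inv_posDef (hA : A.PosDef) (hB : B.PosDef) : (gmean A⁻¹ B (1/2)).PosDef := by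
  rw [gmean_inv_half hA]
  exact (mpow_posDef (hB.mul_mul_same_of_posDef (mpow_posDef hA _)) _).mul_mul_same_of_posDef
    (mpow_posDef hA _)

lemma gmean_inv_mul_mul_self (hA : A.PosDef) (hB : B.PosDef) :
    gmean A⁻¹ B (1/2) * A * gmean A⁻¹ B (1/2) = B := by
  rw [gmean_inv_half hA]
  set R := mpow A (1/2)
  set R' := mpow A (-(1/2))
  have hZ := mpow_half_mul_mpow_half (hB.mul_mul_same_of_posDef (mpow_posDef hA (1/2)))
  set Z := mpow (R * B * R) (1/2)
  have hL := mpow_neg_half_mul_mpow_half hA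
  have hR := mpow_half_mul_mpow_neg_half hA
  calc R' * Z * R' * A * (R' * Z * R')
      = R' * Z * (R' * R) * (R * R') * Z * R' := by
        rw [← mpow_half_mul_mpow_half hA]; noncomm_ring
    _ = R' * (Z * Z) * R' := by rw [hL, hR]; noncomm_ring
    _ = R' * R * B * (R * R') := by rw [hZ]; noncomm_ring
    _ = B := by rw [hL, hR, one_mul, mul_one]

lemma gmean_inv_conj (hA : A.PosDef) (hM : M.PosDef) : gmean A⁻¹ (M * A * M) (1/2) = M := by
  rw [gmean_inv_half hA]
  set R := mpow A (1/2)
  set R' := mpow A (-(1/2))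
  have hL := mpow_neg_half_mul_mpow_half hA
  have hR := mpow_half_mul_mpow_neg_half hA
  have hsq : R * (M * A * M) * R = (R * M * R) * (R * M * R) := by
    rw [← mpow_half_mul_mpow_half hA]; noncomm_ring
  rw [hsq, mpow_mul_self_half (hM.mul_mul_same_of_posDef (mpow_posDef hA _))]
  calc R' * (R * M * R) * R' = R' * R * M * (R * R') := by noncomm_ring
    _ = M := by rw [hL, hR, one_mul, mul_one]

lemma gmean_inv_symm (hA : A.PosDef) (hB : B.PosDef) :
    gmean B⁻¹ A (1/2) = (gmean A⁻¹ B (1/2))⁻¹ := by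
  have hS := gmean_inv_posDef hA hB
  have hSAS := gmean_inv_mul_mul_self hA hB
  set S := gmean A⁻¹ B (1/2)
  have hdet := (Matrix.isUnit_iff_isUnit_det S).1 hS.isUnit
  have hA' : A = S⁻¹ * B * S⁻¹ := by
    rw [← hSAS, ← mul_assoc, ← mul_assoc, Matrix.nonsing_inv_mul S hdet, one_mul, mul_assoc,
      Matrix.mul_nonsing_inv S hdet, mul_one]
  rw [hA']
  exact gmean_inv_conj hB hS.inv

lemma amean_one_amean_one (S : Matrix (Fin n) (Fin n) ℂ) (s t : ℝ) :
    amean 1 (amean 1 S s) t = amean 1 S (t * s) := by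
  simp only [amean]
  push_cast
  module

lemma amean_one_posDef {S : Matrix (Fin n) (Fin n) ℂ} (hS : LoewnerLE 1 S) {s : ℝ} (hs : 0 ≤ s) :
    (amean 1 S s).PosDef := by
  have h : amean 1 S s = 1 + ((s : ℝ) : ℂ) • (S - 1) := by
    simp only [amean]
    push_cast
    module
  rw [h]
  exact Matrix.PosDef.one.add_posSemidef (hS.smul (Complex.zero_le_real.2 hs))

lemma amean_one_inv_mul {S : Matrix (Fin n) (Fin n) ℂ} (hS : IsUnit S) (t : ℝ) :
    amean 1 S⁻¹ (1 - t) * S = amean 1 S t := by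
  simp only [amean, add_mul, smul_mul_assoc, one_mul,
    Matrix.nonsing_inv_mul S ((Matrix.isUnit_iff_isUnit_det S).1 hS)]
  push_cast
  module

lemma mul_amean_one_inv {S : Matrix (Fin n) (Fin n) ℂ} (hS : IsUnit S) (t : ℝ) :
    S * amean 1 S⁻¹ (1 - t) = amean 1 S t := by
  simp only [amean, mul_add, mul_smul_comm, mul_one,
    Matrix.mul_nonsing_inv S ((Matrix.isUnit_iff_isUnit_det S).1 hS)]
  push_cast
  module

lemma wmean_eq_amean (A B : Matrix (Fin n) (Fin n) ℂ) (t : ℝ) :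
    wmean A B t = amean 1 (gmean A⁻¹ B (1/2)) t * A * amean 1 (gmean A⁻¹ B (1/2)) t :=
  rfl

lemma wmean_comm (hA : A.PosDef) (hB : B.PosDef) (t : ℝ) : wmean A B t = wmean B A (1 - t) := by
  have hS := (gmean_inv_posDef hA hB).isUnit
  have hSAS := gmean_inv_mul_mul_self hA hB
  rw [wmean_eq_amean, wmean_eq_amean B A, gmean_inv_symm hA hB]
  set S := gmean A⁻¹ B (1/2)
  calc amean 1 S t * A * amean 1 S t
      = amean 1 S⁻¹ (1 - t) * S * A * (S * amean 1 S⁻¹ (1 - t)) := by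
        rw [amean_one_inv_mul hS, mul_amean_one_inv hS]
    _ = amean 1 S⁻¹ (1 - t) * B * amean 1 S⁻¹ (1 - t) := by rw [← hSAS]; noncomm_ring

lemma posDef_wmean_of_nearLE (hA : A.PosDef) (hAB : NearLE A B) {s : ℝ} (hs : 0 ≤ s) :
    (wmean A B s).PosDef :=
  hA.mul_mul_same_of_posDef (amean_one_posDef hAB hs)

lemma wmean_wmean_of_nearLE (hA : A.PosDef) (hAB : NearLE A B) {s : ℝ} (hs : 0 ≤ s) (t : ℝ) :
    wmean A (wmean A B s) t = wmean A B (t * s) := by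
  rw [wmean_eq_amean A (wmean A B s), wmean_eq_amean A B s,
    gmean_inv_conj hA (amean_one_posDef hAB hs), amean_one_amean_one]
  rfl

end

/-- (1) if `A ⪯ B` then `A ◇ₜ (A ◇ₛ B) = A ◇_{ts} B` for `t, s ≥ 0`;
(2) if `B ⪯ A` then `(A ◇ₛ B) ◇ₜ B = A ◇_{(1−t)s+t} B` for `t, s ≤ 1`. -/
theorem wmean_geodesic_property {n : ℕ} (A B : Matrix (Fin n) (Fin n) ℂ)
    (hA : A.PosDef) (hB : B.PosDef) :
    (NearLE A B → ∀ t s : ℝ, 0 ≤ t → 0 ≤ s →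
      wmean A (wmean A B s) t = wmean A B (t * s)) ∧
    (NearLE B A → ∀ t s : ℝ, t ≤ 1 → s ≤ 1 →
      wmean (wmean A B s) B t = wmean A B ((1 - t) * s + t)) := by
  refine ⟨fun hAB t s _ hs => wmean_wmean_of_nearLE hA hAB hs t, fun hBA t s _ hs => ?_⟩
  have hs' : 0 ≤ 1 - s := sub_nonneg.2 hs
  have hW : wmean A B s = wmean B A (1 - s) := wmean_comm hA hB s
  have hWpd : (wmean A B s).PosDef := hW ▸ posDef_wmean_of_nearLE hB hBA hs'
  calc wmean (wmean A B s) B t = wmean B (wmean B A (1 - s)) (1 - t) := by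
        rw [wmean_comm hWpd hB, hW]
    _ = wmean B A ((1 - t) * (1 - s)) := wmean_wmean_of_nearLE hB hBA hs' _
    _ = wmean A B ((1 - t) * s + t) := by
        rw [wmean_comm hA hB ((1 - t) * s + t)]
        ring_nf
end
end

section
/- Let A, B be n×n complex positive definite matrices. The following are equivalent: (1) A ⪯ B; (2) A ◇_t B ⪯ A ◇_s B for some 0 ≤ t < s ≤ 1; (3) A ♮_t B ⪯ A ♮_s B for some real t < s. Moreover, if A ⪯ B, then for all 0 ≤ t < s one has A ◇_t B ⪯ A ◇_s B, and for all real t < s one has A ♮_t B ⪯ A ♮_s B. -/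
open scoped ComplexOrder Matrix

noncomputable section

/-! Write `C = A⁻¹ ♯ B`. Both curves have the form `γ t = f_t(C) A f_t(C)` with `f_t > 0` on the
spectrum of `C`: `f_t x = x ^ t` for `♮` and `f_t x = 1 - t + t x` for `◇`. Since
`X⁻¹ ♯ (Z X Z) = Z` for positive definite `X, Z` (the Riccati equation) and functions of `C`
commute, `(γ t)⁻¹ ♯ γ s = (f_s / f_t)(C)`, so `γ t ⪯ γ s` iff `f_t ≤ f_s` on the spectrum of `C`.
For `t < s` this scalar inequality is `x ≥ 1` in both cases, i.e. `I ≤ C`, which is `A ⪯ B`. -/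

lemma Real.rpow_le_rpow_iff_one_le {x t s : ℝ} (hx : 0 < x) (hts : t < s) :
    x ^ t ≤ x ^ s ↔ 1 ≤ x := by
  refine ⟨fun h => ?_, fun h => Real.rpow_le_rpow_of_exponent_le h hts.le⟩
  by_contra! hx1
  exact (Real.rpow_lt_rpow_of_exponent_gt hx hx1 hts).not_ge h

lemma affine_le_affine_iff_one_le {x t s : ℝ} (hts : t < s) :
    1 - t + t * x ≤ 1 - s + s * x ↔ 1 ≤ x := by
  have hst : 0 < s - t := sub_pos.mpr hts
  constructor <;> intro h <;> nlinarith

namespace Matrix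

open scoped MatrixOrder

variable {n : ℕ} {A C X Z : Matrix (Fin n) (Fin n) ℂ}

lemma PosDef.rpow (hX : X.PosDef) (t : ℝ) : (X ^ t).PosDef :=
  (LE.le.posSemidef CFC.rpow_nonneg).posDef_iff_isUnit.mpr (hX.isUnit.cfcRpow _)

lemma PosDef.inv_rpow (hX : X.PosDef) (t : ℝ) : X⁻¹ ^ t = X ^ (-t) := by
  simpa using (CFC.rpow_neg hX.isUnit.unit t).symm

lemma PosDef.conj (hX : X.PosDef) (hZ : Z.PosDef) : (Z * X * Z).PosDef :=
  IsStrictlyPositive.posDef <| (hZ.isUnit.isStrictlyPositive_iff_conjugate_of_isSelfAdjoint X Z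
    hZ.isHermitian.isSelfAdjoint).mpr hX.isStrictlyPositive

lemma PosDef.pos_of_mem_spectrum (hX : X.PosDef) {x : ℝ} (hx : x ∈ spectrum ℝ X) : 0 < x :=
  (StarOrderedRing.isStrictlyPositive_iff_spectrum_pos (R := ℝ) X).mp hX.isStrictlyPositive x hx

lemma posDef_cfc (hC : C.IsHermitian) {f : ℝ → ℝ} (hf : ∀ x ∈ spectrum ℝ C, 0 < f x) :
    (cfc f C).PosDef :=
  IsStrictlyPositive.posDef <| (cfc_isStrictlyPositive_iff f C
    (C.finite_real_spectrum.continuousOn f) hC.isSelfAdjoint).mpr hf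

lemma smul_one_add_smul_eq_cfc (hC : C.IsHermitian) (a b : ℝ) :
    (a : ℂ) • (1 : Matrix (Fin n) (Fin n) ℂ) + (b : ℂ) • C = cfc (fun x : ℝ => a + b * x) C := by
  rw [cfc_add .., cfc_const_mul_id b C hC.isSelfAdjoint, cfc_const a C hC.isSelfAdjoint,
    Algebra.algebraMap_eq_smul_one, Complex.coe_smul, Complex.coe_smul]

end Matrix

section NearOrder

open Matrix
open scoped MatrixOrder

variable {n : ℕ} {A B C X Z : Matrix (Fin n) (Fin n) ℂ}

lemma mpow_eq_rpow (hA : A.PosSemidef) (t : ℝ) : mpow A t = A ^ t :=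
  (CFC.rpow_eq_cfc_real hA.nonneg).symm

lemma gmean_posDef (hA : A.PosDef) (hB : B.PosDef) (t : ℝ) : (gmean A B t).PosDef := by
  rw [gmean, mpow_eq_rpow hA.posSemidef, mpow_eq_rpow hA.posSemidef]
  have hinner := hB.conj (hA.rpow (-(1 / 2)))
  rw [mpow_eq_rpow hinner.posSemidef]
  exact (hinner.rpow t).conj (hA.rpow _)

lemma gmean_inv_conj_s10 (hX : X.PosDef) (hZ : Z.PosDef) : gmean X⁻¹ (Z * X * Z) (1 / 2) = Z := by
  set P := X ^ (1 / 2 : ℝ) with hP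
  have hPP : P * P = X := by
    rw [← CFC.rpow_add hX.isUnit, add_halves, CFC.rpow_one X hX.posSemidef.nonneg]
  have hW : (P * Z * P).PosDef := hZ.conj (hX.rpow _)
  have hinner : P * (Z * X * Z) * P = (P * Z * P) * (P * Z * P) := by
    rw [← hPP]; simp only [mul_assoc]
  rw [gmean, mpow_eq_rpow hX.inv.posSemidef, mpow_eq_rpow hX.inv.posSemidef, hX.inv_rpow,
    hX.inv_rpow, neg_neg, ← hP, hinner,
    mpow_eq_rpow (LE.le.posSemidef hW.isHermitian.isSelfAdjoint.mul_self_nonneg),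
    ← CFC.sqrt_eq_rpow, CFC.sqrt_mul_self _ hW.posSemidef.nonneg]
  calc X ^ (-(1 / 2) : ℝ) * (P * Z * P) * X ^ (-(1 / 2) : ℝ)
      = (X ^ (-(1 / 2) : ℝ) * P) * Z * (P * X ^ (-(1 / 2) : ℝ)) := by simp only [mul_assoc]
    _ = Z := by rw [hP, CFC.rpow_neg_mul_rpow _ hX.isStrictlyPositive,
      CFC.rpow_mul_rpow_neg _ hX.isStrictlyPositive, one_mul, mul_one]

-- Under `MatrixOrder`, `LoewnerLE X Y` is definitionally `X ≤ Y`.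
lemma nearLE_iff_one_le : NearLE A B ↔ 1 ≤ gmean A⁻¹ B (1 / 2) := Iff.rfl

lemma nearLE_conj_iff (hX : X.PosDef) (hZ : Z.PosDef) : NearLE X (Z * X * Z) ↔ 1 ≤ Z := by
  rw [nearLE_iff_one_le, gmean_inv_conj_s10 hX hZ]

lemma nearLE_cfc_conj_iff (hA : A.PosDef) (hC : C.IsHermitian) {f g : ℝ → ℝ}
    (hf : ∀ x ∈ spectrum ℝ C, 0 < f x) (hg : ∀ x ∈ spectrum ℝ C, 0 < g x) :
    NearLE (cfc f C * A * cfc f C) (cfc g C * A * cfc g C) ↔ ∀ x ∈ spectrum ℝ C, f x ≤ g x := by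
  have hcont (h : ℝ → ℝ) : ContinuousOn h (spectrum ℝ C) := C.finite_real_spectrum.continuousOn h
  have hquot : cfc g C = cfc (fun x => g x / f x) C * cfc f C := by
    rw [← cfc_mul _ _ C (hcont _) (hcont _)]
    exact cfc_congr fun x hx => (div_mul_cancel₀ _ (hf x hx).ne').symm
  have hcomm : Commute (cfc f C) (cfc (fun x => g x / f x) C) := cfc_commute_cfc _ _ C
  have hconj : cfc g C * A * cfc g C = cfc (fun x => g x / f x) C * (cfc f C * A * cfc f C) *
      cfc (fun x => g x / f x) C := by
    rw [hquot]; nth_rw 2 [← hcomm.eq]; simp only [mul_assoc]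
  rw [hconj, nearLE_conj_iff (hA.conj (posDef_cfc hC hf))
    (posDef_cfc hC fun x hx => div_pos (hg x hx) (hf x hx)),
    one_le_cfc_iff _ _ (hcont _) hC.isSelfAdjoint]
  exact forall₂_congr fun x hx => one_le_div (hf x hx)

lemma smean_eq_cfc (A B : Matrix (Fin n) (Fin n) ℂ) (t : ℝ) :
    smean A B t = cfc (fun x : ℝ => x ^ t) (gmean A⁻¹ B (1 / 2)) * A *
      cfc (fun x : ℝ => x ^ t) (gmean A⁻¹ B (1 / 2)) := rfl

lemma wmean_eq_cfc (hA : A.PosDef) (hB : B.PosDef) (t : ℝ) :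
    wmean A B t = cfc (fun x : ℝ => 1 - t + t * x) (gmean A⁻¹ B (1 / 2)) * A *
      cfc (fun x : ℝ => 1 - t + t * x) (gmean A⁻¹ B (1 / 2)) := by
  rw [wmean, smul_one_add_smul_eq_cfc (gmean_posDef hA.inv hB _).isHermitian]

lemma nearLE_iff_spectrum (hA : A.PosDef) (hB : B.PosDef) :
    NearLE A B ↔ ∀ x ∈ spectrum ℝ (gmean A⁻¹ B (1 / 2)), 1 ≤ x :=
  CFC.one_le_iff _ (gmean_posDef hA.inv hB _).isHermitian.isSelfAdjoint

lemma nearLE_smean_iff (hA : A.PosDef) (hB : B.PosDef) {t s : ℝ} (hts : t < s) :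
    NearLE (smean A B t) (smean A B s) ↔ NearLE A B := by
  have hC := gmean_posDef hA.inv hB (1 / 2)
  rw [smean_eq_cfc, smean_eq_cfc, nearLE_cfc_conj_iff hA hC.isHermitian
    (fun x hx => Real.rpow_pos_of_pos (hC.pos_of_mem_spectrum hx) t)
    (fun x hx => Real.rpow_pos_of_pos (hC.pos_of_mem_spectrum hx) s), nearLE_iff_spectrum hA hB]
  exact forall₂_congr fun x hx => Real.rpow_le_rpow_iff_one_le (hC.pos_of_mem_spectrum hx) hts

lemma nearLE_wmean_iff_of_pos (hA : A.PosDef) (hB : B.PosDef) {t s : ℝ} (hts : t < s)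
    (ht : ∀ x ∈ spectrum ℝ (gmean A⁻¹ B (1 / 2)), 0 < 1 - t + t * x)
    (hs : ∀ x ∈ spectrum ℝ (gmean A⁻¹ B (1 / 2)), 0 < 1 - s + s * x) :
    NearLE (wmean A B t) (wmean A B s) ↔ NearLE A B := by
  rw [wmean_eq_cfc hA hB, wmean_eq_cfc hA hB,
    nearLE_cfc_conj_iff hA (gmean_posDef hA.inv hB _).isHermitian ht hs, nearLE_iff_spectrum hA hB]
  exact forall₂_congr fun x _ => affine_le_affine_iff_one_le hts

lemma nearLE_wmean_iff (hA : A.PosDef) (hB : B.PosDef) {t s : ℝ} (ht : 0 ≤ t) (hts : t < s)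
    (hs : s ≤ 1) : NearLE (wmean A B t) (wmean A B s) ↔ NearLE A B := by
  have hC := gmean_posDef hA.inv hB (1 / 2)
  refine nearLE_wmean_iff_of_pos hA hB hts (fun x hx => ?_) (fun x hx => ?_) <;>
    nlinarith [hC.pos_of_mem_spectrum hx]

lemma NearLE.wmean_mono (h : NearLE A B) (hA : A.PosDef) (hB : B.PosDef) {t s : ℝ}
    (ht : 0 ≤ t) (hts : t < s) : NearLE (wmean A B t) (wmean A B s) := by
  have hspec := (nearLE_iff_spectrum hA hB).mp h
  refine (nearLE_wmean_iff_of_pos hA hB hts (fun x hx => ?_) (fun x hx => ?_)).mpr h <;>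
    nlinarith [hspec x hx]

end NearOrder

/-- equivalence of (1) `A ⪯ B`; (2) `A ◇ₜ B ⪯ A ◇ₛ B` for some
`0 ≤ t < s ≤ 1`; (3) `A ♮ₜ B ⪯ A ♮ₛ B` for some `t < s`; and, when `A ⪯ B`, monotonicity
of both curves in the near order. -/
theorem near_order_monotone_curves {n : ℕ} (A B : Matrix (Fin n) (Fin n) ℂ)
    (hA : A.PosDef) (hB : B.PosDef) :
    (NearLE A B ↔ ∃ t s : ℝ, 0 ≤ t ∧ t < s ∧ s ≤ 1 ∧ NearLE (wmean A B t) (wmean A B s)) ∧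
    (NearLE A B ↔ ∃ t s : ℝ, t < s ∧ NearLE (smean A B t) (smean A B s)) ∧
    (NearLE A B → ∀ t s : ℝ, 0 ≤ t → t < s → NearLE (wmean A B t) (wmean A B s)) ∧
    (NearLE A B → ∀ t s : ℝ, t < s → NearLE (smean A B t) (smean A B s)) := by
  refine ⟨⟨fun h => ⟨0, 1, le_rfl, one_pos, le_rfl, h.wmean_mono hA hB le_rfl one_pos⟩, ?_⟩,
    ⟨fun h => ⟨0, 1, one_pos, (nearLE_smean_iff hA hB one_pos).mpr h⟩, ?_⟩,
    fun h _ _ => h.wmean_mono hA hB,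
    fun h t s hts => (nearLE_smean_iff hA hB hts).mpr h⟩
  · rintro ⟨t, s, ht, hts, hs, h⟩
    exact (nearLE_wmean_iff hA hB ht hts hs).mp h
  · rintro ⟨t, s, hts, h⟩
    exact (nearLE_smean_iff hA hB hts).mp h
end
end
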